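/- arXiv:2410.00535 — 2 statements merged into one kernel-verified Lean document; each statement's English description precedes it below -/
import Mathlib

section
/- If T₁ and T₂ are representations of X with variation of information VI(T₁, T₂) := H(T₁|T₂) + H(T₂|T₁) = 0, then T₁ ≅ T₂, i.e., there is a bijection σ: supp(T₁) → supp(T₂) with q_{T₁|X}(t₁|x) = q_{T₂|X}(σ(t₁)|x) for all t₁ ∈ supp(T₁), x ∈ supp(X). -/
/-!
`H(T₁,T₂) - H(T₁) = ∑_{t₁} (∑_{t₂} η(p(t₁,t₂)) - η(p(t₁)))` with `η = negMulLog`, and each summand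
is nonnegative, vanishing only when the row `p(t₁, ·)` has at most one positive entry
(`η` is strictly subadditive on positive reals). So `VI = 0` forces the support of the joint law to
be the graph of a bijection `σ` between the supports of `T₁` and `T₂`. For `p(x) > 0` the product
`q₁(t₁|x) q₂(t₂|x)` vanishes off that graph, and summing it over `t₂`, resp. over `t₁`, gives
`q₁(t₁|x) = q₁(t₁|x) q₂(σ t₁|x) = q₂(σ t₁|x)`.
-/

open Finset

/-- Shannon entropy of a finitely supported distribution. -/
noncomputable def ent {α : Type*} [Fintype α] (p : α → ℝ) : ℝ := ∑ a, Real.negMulLog (p a)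

open Real

section NegMulLog

variable {ι : Type*} [Fintype ι] {a : ι → ℝ}

lemma sum_negMulLog_sub_negMulLog_sum (a : ι → ℝ) :
    ∑ i, negMulLog (a i) - negMulLog (∑ i, a i) = ∑ i, a i * (log (∑ j, a j) - log (a i)) := by
  simp only [negMulLog, neg_mul, sum_neg_distrib, mul_sub, sum_sub_distrib, ← sum_mul]
  ring

lemma mul_log_sub_log_nonneg {x y : ℝ} (hx : 0 ≤ x) (hxy : x ≤ y) : 0 ≤ x * (log y - log x) := by
  rcases hx.eq_or_lt with rfl | hx
  · simp
  · exact mul_nonneg hx.le (sub_nonneg.2 (log_le_log hx hxy))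

lemma mul_log_sum_sub_log_nonneg (ha : ∀ i, 0 ≤ a i) (i : ι) :
    0 ≤ a i * (log (∑ j, a j) - log (a i)) :=
  mul_log_sub_log_nonneg (ha i) (single_le_sum (fun j _ => ha j) (mem_univ i))

lemma negMulLog_sum_le (ha : ∀ i, 0 ≤ a i) : negMulLog (∑ i, a i) ≤ ∑ i, negMulLog (a i) := by
  rw [← sub_nonneg, sum_negMulLog_sub_negMulLog_sum]
  exact sum_nonneg fun i _ => mul_log_sum_sub_log_nonneg ha i

lemma negMulLog_sum_lt (ha : ∀ i, 0 ≤ a i) {i j : ι} (hi : 0 < a i) (hj : 0 < a j) (hij : i ≠ j) :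
    negMulLog (∑ i, a i) < ∑ i, negMulLog (a i) := by
  classical
  have hlt : a i < ∑ k, a k :=
    calc a i < a i + a j := lt_add_of_pos_right _ hj
      _ = ∑ k ∈ {i, j}, a k := (sum_pair hij).symm
      _ ≤ ∑ k, a k := sum_le_univ_sum_of_nonneg ha
  rw [← sub_pos, sum_negMulLog_sub_negMulLog_sum]
  exact sum_pos' (fun k _ => mul_log_sum_sub_log_nonneg ha k)
    ⟨i, mem_univ i, mul_pos hi (sub_pos.2 (log_lt_log hi hlt))⟩

lemma nonempty_of_sum_eq_one {f : ι → ℝ} (h : ∑ i, f i = 1) : Nonempty ι :=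
  univ_nonempty_iff.mp (nonempty_of_sum_ne_zero (h ▸ one_ne_zero))

end NegMulLog

section CondEnt

variable {Θ₁ Θ₂ : Type*} [Fintype Θ₁] [Fintype Θ₂] {p : Θ₁ → Θ₂ → ℝ}

/-- `H(T₂ | T₁)` for the joint law `p(t₁, t₂)`. -/
noncomputable def condEnt (p : Θ₁ → Θ₂ → ℝ) : ℝ :=
  ent (fun tt : Θ₁ × Θ₂ => p tt.1 tt.2) - ent (fun t₁ => ∑ t₂, p t₁ t₂)

lemma condEnt_eq_sum (p : Θ₁ → Θ₂ → ℝ) :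
    condEnt p = ∑ t₁, (∑ t₂, negMulLog (p t₁ t₂) - negMulLog (∑ t₂, p t₁ t₂)) := by
  rw [condEnt, ent, ent, Fintype.sum_prod_type, ← sum_sub_distrib]

lemma condEnt_flip (p : Θ₁ → Θ₂ → ℝ) :
    condEnt (flip p) = ent (fun tt : Θ₁ × Θ₂ => p tt.1 tt.2) - ent (fun t₂ => ∑ t₁, p t₁ t₂) := by
  rw [condEnt_eq_sum, ent, ent, Fintype.sum_prod_type_right, ← sum_sub_distrib]
  rfl

lemma condEnt_nonneg (hp : ∀ t₁ t₂, 0 ≤ p t₁ t₂) : 0 ≤ condEnt p := by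
  rw [condEnt_eq_sum]
  exact sum_nonneg fun t₁ _ => sub_nonneg.2 (negMulLog_sum_le (hp t₁))

lemma eq_of_condEnt_eq_zero (hp : ∀ t₁ t₂, 0 ≤ p t₁ t₂) (h : condEnt p = 0) {t₁ : Θ₁} {a b : Θ₂}
    (ha : 0 < p t₁ a) (hb : 0 < p t₁ b) : a = b := by
  by_contra hab
  have hpos : 0 < condEnt p := by
    rw [condEnt_eq_sum]
    exact sum_pos' (fun t _ => sub_nonneg.2 (negMulLog_sum_le (hp t)))
      ⟨t₁, mem_univ _, sub_pos.2 (negMulLog_sum_lt (hp t₁) ha hb hab)⟩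
  exact hpos.ne' h

lemma exists_bijOn_of_pos_unique [Nonempty Θ₂] (hp : ∀ t₁ t₂, 0 ≤ p t₁ t₂)
    (hrow : ∀ t₁ a b, 0 < p t₁ a → 0 < p t₁ b → a = b)
    (hcol : ∀ t₂ a b, 0 < p a t₂ → 0 < p b t₂ → a = b) :
    ∃ σ : Θ₁ → Θ₂, Set.BijOn σ {t₁ | 0 < ∑ t₂, p t₁ t₂} {t₂ | 0 < ∑ t₁, p t₁ t₂} ∧
      ∀ t₁, 0 < ∑ t₂, p t₁ t₂ → 0 < p t₁ (σ t₁) := by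
  have hrow_pos : ∀ t₁, 0 < ∑ t₂, p t₁ t₂ ↔ ∃ t₂, 0 < p t₁ t₂ := fun t₁ => by
    simp [sum_pos_iff_of_nonneg fun t₂ _ => hp t₁ t₂]
  have hcol_pos : ∀ t₂, 0 < ∑ t₁, p t₁ t₂ ↔ ∃ t₁, 0 < p t₁ t₂ := fun t₂ => by
    simp [sum_pos_iff_of_nonneg fun t₁ _ => hp t₁ t₂]
  obtain ⟨σ, hσ⟩ : ∃ σ : Θ₁ → Θ₂, ∀ t₁, 0 < ∑ t₂, p t₁ t₂ → 0 < p t₁ (σ t₁) :=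
    ⟨fun t₁ => Classical.epsilon fun t₂ => 0 < p t₁ t₂,
      fun t₁ ht₁ => Classical.epsilon_spec ((hrow_pos t₁).1 ht₁)⟩
  refine ⟨σ, ⟨?_, ?_, ?_⟩, hσ⟩
  · exact fun t₁ ht₁ => (hcol_pos _).2 ⟨t₁, hσ t₁ ht₁⟩
  · intro a ha b hb hab
    exact hcol _ a b (hσ a ha) (hab ▸ hσ b hb)
  · intro t₂ ht₂
    obtain ⟨t₁, ht₁⟩ := (hcol_pos t₂).1 ht₂
    have hmem : 0 < ∑ t₂, p t₁ t₂ := (hrow_pos t₁).2 ⟨t₂, ht₁⟩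
    exact ⟨t₁, hmem, hrow t₁ _ _ (hσ t₁ hmem) ht₁⟩

end CondEnt

section Joint

variable {X Θ₁ Θ₂ : Type*} [Fintype X]
  {pX : X → ℝ} {q₁ : Θ₁ → X → ℝ} {q₂ : Θ₂ → X → ℝ}

noncomputable def joint (pX : X → ℝ) (q₁ : Θ₁ → X → ℝ) (q₂ : Θ₂ → X → ℝ) (t₁ : Θ₁) (t₂ : Θ₂) : ℝ :=
  ∑ x, pX x * q₁ t₁ x * q₂ t₂ x

lemma joint_nonneg (hpX0 : ∀ x, 0 ≤ pX x) (hq₁0 : ∀ t x, 0 ≤ q₁ t x) (hq₂0 : ∀ t x, 0 ≤ q₂ t x)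
    (t₁ : Θ₁) (t₂ : Θ₂) : 0 ≤ joint pX q₁ q₂ t₁ t₂ :=
  sum_nonneg fun x _ => mul_nonneg (mul_nonneg (hpX0 x) (hq₁0 t₁ x)) (hq₂0 t₂ x)

lemma sum_joint_right [Fintype Θ₂] (hq₂1 : ∀ x, ∑ t, q₂ t x = 1) (t₁ : Θ₁) :
    ∑ t₂, joint pX q₁ q₂ t₁ t₂ = ∑ x, pX x * q₁ t₁ x := by
  simp only [joint]
  rw [sum_comm]
  simp only [← mul_sum, hq₂1, mul_one]

lemma sum_joint_left [Fintype Θ₁] (hq₁1 : ∀ x, ∑ t, q₁ t x = 1) (t₂ : Θ₂) :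
    ∑ t₁, joint pX q₁ q₂ t₁ t₂ = ∑ x, pX x * q₂ t₂ x := by
  simp only [joint, mul_right_comm _ (q₁ _ _)]
  rw [sum_comm]
  simp only [← mul_sum, hq₁1, mul_one]

lemma mul_eq_zero_of_joint_eq_zero (hpX0 : ∀ x, 0 ≤ pX x) (hq₁0 : ∀ t x, 0 ≤ q₁ t x)
    (hq₂0 : ∀ t x, 0 ≤ q₂ t x) {t₁ : Θ₁} {t₂ : Θ₂} (h : joint pX q₁ q₂ t₁ t₂ = 0) {x : X}
    (hx : 0 < pX x) : q₁ t₁ x * q₂ t₂ x = 0 := by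
  have hterm := (sum_eq_zero_iff_of_nonneg fun y _ =>
    mul_nonneg (mul_nonneg (hpX0 y) (hq₁0 t₁ y)) (hq₂0 t₂ y)).1 h x (mem_univ x)
  rw [mul_assoc] at hterm
  exact (mul_eq_zero.1 hterm).resolve_left hx.ne'

lemma apply_eq_of_joint_pos_unique [Fintype Θ₁] [Fintype Θ₂] (hpX0 : ∀ x, 0 ≤ pX x)
    (hq₁0 : ∀ t x, 0 ≤ q₁ t x) (hq₁1 : ∀ x, ∑ t, q₁ t x = 1)
    (hq₂0 : ∀ t x, 0 ≤ q₂ t x) (hq₂1 : ∀ x, ∑ t, q₂ t x = 1) {t₁ : Θ₁} {t₂ : Θ₂}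
    (hrow : ∀ t, 0 < joint pX q₁ q₂ t₁ t → t = t₂) (hcol : ∀ t, 0 < joint pX q₁ q₂ t t₂ → t = t₁)
    {x : X} (hx : 0 < pX x) : q₁ t₁ x = q₂ t₂ x := by
  have hzero : ∀ {a b}, ¬0 < joint pX q₁ q₂ a b → q₁ a x * q₂ b x = 0 := fun h =>
    mul_eq_zero_of_joint_eq_zero hpX0 hq₁0 hq₂0
      ((joint_nonneg hpX0 hq₁0 hq₂0 _ _).eq_or_lt.resolve_right h).symm hx
  calc q₁ t₁ x = ∑ t, q₁ t₁ x * q₂ t x := by rw [← mul_sum, hq₂1, mul_one]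
    _ = q₁ t₁ x * q₂ t₂ x :=
      sum_eq_single t₂ (fun t _ ht => hzero (mt (hrow t) ht)) (absurd (mem_univ _))
    _ = ∑ t, q₁ t x * q₂ t₂ x :=
      (sum_eq_single t₁ (fun t _ ht => hzero (mt (hcol t) ht)) (absurd (mem_univ _))).symm
    _ = q₂ t₂ x := by rw [← sum_mul, hq₁1, one_mul]

end Joint

/-- If `T₁`, `T₂` are representations of `X` (conditionally independent given `X`, with joint
`p(t₁,t₂) = ∑ x p(x) q₁(t₁|x) q₂(t₂|x)`) and the variation of information
`VI(T₁,T₂) = H(T₁|T₂) + H(T₂|T₁) = 0`, then `T₁ ≅ T₂`: there is a bijection `σ` of supports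
with `q₁(t₁|x) = q₂(σ t₁|x)` on supports. -/
theorem vi_zero_implies_equivalent
    {X Θ₁ Θ₂ : Type*} [Fintype X] [Fintype Θ₁] [Fintype Θ₂]
    (pX : X → ℝ) (hpX0 : ∀ x, 0 ≤ pX x) (hpX1 : ∑ x, pX x = 1)
    (q₁ : Θ₁ → X → ℝ) (q₂ : Θ₂ → X → ℝ)
    (hq₁0 : ∀ t x, 0 ≤ q₁ t x) (hq₁1 : ∀ x, ∑ t, q₁ t x = 1)
    (hq₂0 : ∀ t x, 0 ≤ q₂ t x) (hq₂1 : ∀ x, ∑ t, q₂ t x = 1)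
    (hVI :
      (ent (fun tt : Θ₁ × Θ₂ => ∑ x, pX x * q₁ tt.1 x * q₂ tt.2 x)
        - ent (fun t₂ : Θ₂ => ∑ x, pX x * q₂ t₂ x))
      + (ent (fun tt : Θ₁ × Θ₂ => ∑ x, pX x * q₁ tt.1 x * q₂ tt.2 x)
        - ent (fun t₁ : Θ₁ => ∑ x, pX x * q₁ t₁ x)) = 0) :
    ∃ σ : Θ₁ → Θ₂,
      Set.BijOn σ {t₁ | 0 < ∑ x, pX x * q₁ t₁ x} {t₂ | 0 < ∑ x, pX x * q₂ t₂ x} ∧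
      ∀ t₁ ∈ {t₁ | 0 < ∑ x, pX x * q₁ t₁ x}, ∀ x, 0 < pX x → q₁ t₁ x = q₂ (σ t₁) x := by
  have hp := joint_nonneg hpX0 hq₁0 hq₂0
  have hVI' : condEnt (flip (joint pX q₁ q₂)) + condEnt (joint pX q₁ q₂) = 0 := by
    rw [condEnt_flip, condEnt]
    simp only [sum_joint_left hq₁1, sum_joint_right hq₂1]
    exact hVI
  obtain ⟨h₂, h₁⟩ := (add_eq_zero_iff_of_nonneg (condEnt_nonneg fun t₂ t₁ => hp t₁ t₂)
    (condEnt_nonneg hp)).1 hVI'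
  obtain ⟨x₀⟩ := nonempty_of_sum_eq_one hpX1
  have : Nonempty Θ₂ := nonempty_of_sum_eq_one (hq₂1 x₀)
  obtain ⟨σ, hbij, hσ⟩ := exists_bijOn_of_pos_unique hp
    (fun _ _ _ => eq_of_condEnt_eq_zero hp h₁)
    (fun _ _ _ => eq_of_condEnt_eq_zero (fun t₂ t₁ => hp t₁ t₂) h₂)
  simp only [sum_joint_left hq₁1, sum_joint_right hq₂1] at hbij hσ
  refine ⟨σ, hbij, fun t₁ ht₁ x hx => ?_⟩
  exact apply_eq_of_joint_pos_unique hpX0 hq₁0 hq₁1 hq₂0 hq₂1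
    (fun t ht => eq_of_condEnt_eq_zero hp h₁ ht (hσ t₁ ht₁))
    (fun t ht => eq_of_condEnt_eq_zero (fun t₂ t₁ => hp t₁ t₂) h₂ ht (hσ t₁ ht₁)) hx
end

section
/- Concavity bound linking causal entropy of a representation to that of the base variable: for each t, the entropy of the mixture p_Y^{do(T=t)} = Σ_x p*(x|t) p_Y^{do(X=x)} is at least the corresponding mixture of entropies, i.e., H(Y|do(T=t)) ≥ Σ_x p*(x|t) H(Y|do(X=x)); consequently H_c(Y|do(T)) ≥ H_c(Y|do(X∼p*)) and I_c(Y|do(T)) ≤ I_c(Y|do(X∼p*)) when the protocol over T is the induced one p*(t) = Σ_x q(t|x)p*(x). -/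
/-!
Entropy is a sum of values of the concave function `negMulLog`, so Jensen's inequality, applied
coordinatewise, shows that the entropy of a mixture dominates the mixture of entropies; with the
weights `p*(x|t)` this is the bound for each `t`. Weighting it by the induced `p*(t)` and using
`∑ t, p*(t) p*(x|t) = p*(x)` gives the bound on causal entropies; subtracting from `H(Y)`
reverses it for causal information.
-/

open Finset

section Concavity

variable {X Y : Type*} [Fintype X] [Fintype Y]

theorem sum_mul_ent_le_ent_sum (w : X → ℝ) (hw0 : ∀ x, 0 ≤ w x) (hw1 : ∑ x, w x = 1)
    (p : X → Y → ℝ) (hp0 : ∀ x y, 0 ≤ p x y) :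
    ∑ x, w x * ent (p x) ≤ ent (fun y => ∑ x, w x * p x y) := by
  calc ∑ x, w x * ent (p x) = ∑ y, ∑ x, w x * Real.negMulLog (p x y) := by
        simp only [ent, Finset.mul_sum]
        exact Finset.sum_comm
    _ ≤ ent (fun y => ∑ x, w x * p x y) :=
        Finset.sum_le_sum fun y _ => by
          simpa using Real.concaveOn_negMulLog.le_map_sum (t := univ) (w := w)
            (p := fun x => p x y) (fun x _ => hw0 x) hw1 (fun x _ => hp0 x y)

theorem sum_div_sum_eq_one {v : X → ℝ} (hv : 0 < ∑ x, v x) :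
    ∑ x, v x / ∑ x', v x' = 1 := by
  rw [← Finset.sum_div, div_self hv.ne']

/-- At zero total mass both sides vanish, the weights `v x / 0` being junk zeros. -/
theorem sum_mul_ent_le_mass_mul_ent (v : X → ℝ) (hv0 : ∀ x, 0 ≤ v x)
    (p : X → Y → ℝ) (hp0 : ∀ x y, 0 ≤ p x y) :
    ∑ x, v x * ent (p x)
      ≤ (∑ x, v x) * ent (fun y => ∑ x, (v x / ∑ x', v x') * p x y) := by
  rcases (Finset.sum_nonneg fun x _ => hv0 x).lt_or_eq with hpos | hzero
  · calc ∑ x, v x * ent (p x) = (∑ x, v x) * ∑ x, (v x / ∑ x', v x') * ent (p x) := by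
          rw [Finset.mul_sum]
          refine Finset.sum_congr rfl fun x _ => ?_
          field_simp
      _ ≤ _ := mul_le_mul_of_nonneg_left
          (sum_mul_ent_le_ent_sum _ (fun x => div_nonneg (hv0 x) hpos.le)
            (sum_div_sum_eq_one hpos) p hp0) hpos.le
  · have hv : ∀ x, v x = 0 := fun x =>
      (Finset.sum_eq_zero_iff_of_nonneg fun x _ => hv0 x).1 hzero.symm x (mem_univ x)
    simp [hv]

end Concavity

theorem concavity_bound_for_representations_general
    {X T Y : Type*} [Fintype X] [Fintype T] [Fintype Y]
    (pstar : X → ℝ) (hps0 : ∀ x, 0 ≤ pstar x)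
    (q : T → X → ℝ) (hq0 : ∀ t x, 0 ≤ q t x) (hq1 : ∀ x, ∑ t, q t x = 1)
    (pdo : X → Y → ℝ) (hd0 : ∀ x y, 0 ≤ pdo x y)
    (pY : Y → ℝ) :
    (∀ t, 0 < ∑ x, q t x * pstar x →
      (∑ x, (q t x * pstar x / ∑ x', q t x' * pstar x') * ent (pdo x))
        ≤ ent (fun y => ∑ x, (q t x * pstar x / ∑ x', q t x' * pstar x') * pdo x y)) ∧
    ((∑ x, pstar x * ent (pdo x))
      ≤ ∑ t, (∑ x, q t x * pstar x) *
          ent (fun y => ∑ x, (q t x * pstar x / ∑ x', q t x' * pstar x') * pdo x y)) ∧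
    ((ent pY - ∑ t, (∑ x, q t x * pstar x) *
          ent (fun y => ∑ x, (q t x * pstar x / ∑ x', q t x' * pstar x') * pdo x y))
      ≤ ent pY - ∑ x, pstar x * ent (pdo x)) := by
  have hjoint : ∀ t x, 0 ≤ q t x * pstar x := fun t x => mul_nonneg (hq0 t x) (hps0 x)
  have htotal : ∑ x, pstar x * ent (pdo x) = ∑ t, ∑ x, q t x * pstar x * ent (pdo x) := by
    rw [Finset.sum_comm]
    refine Finset.sum_congr rfl fun x _ => ?_
    rw [← Finset.sum_mul, ← Finset.sum_mul, hq1 x, one_mul]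
  have hcausal : ∑ x, pstar x * ent (pdo x)
      ≤ ∑ t, (∑ x, q t x * pstar x) *
          ent (fun y => ∑ x, (q t x * pstar x / ∑ x', q t x' * pstar x') * pdo x y) :=
    htotal ▸ Finset.sum_le_sum fun t _ =>
      sum_mul_ent_le_mass_mul_ent _ (hjoint t) pdo hd0
  refine ⟨fun t ht => ?_, hcausal, sub_le_sub_left hcausal _⟩
  exact sum_mul_ent_le_ent_sum _ (fun x => div_nonneg (hjoint t x) ht.le)
    (sum_div_sum_eq_one ht) pdo hd0

/-- Concavity bound: for each `t` with `p*(t) > 0`, the entropy of the mixture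
`p_Y^{do(T=t)} = ∑ x p*(x|t)·p_Y^{do(X=x)}` is at least the mixture of entropies;
consequently `H_c(Y|do(T)) ≥ H_c(Y|do(X∼p*))` and `I_c(Y|do(T)) ≤ I_c(Y|do(X∼p*))`
with the induced protocol `p*(t) = ∑ x q(t|x)p*(x)`. -/
theorem concavity_bound_for_representations
    {X T Y : Type*} [Fintype X] [Fintype T] [Fintype Y]
    (pstar : X → ℝ) (hps0 : ∀ x, 0 ≤ pstar x) (hps1 : ∑ x, pstar x = 1)
    (q : T → X → ℝ) (hq0 : ∀ t x, 0 ≤ q t x) (hq1 : ∀ x, ∑ t, q t x = 1)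
    (pdo : X → Y → ℝ) (hd0 : ∀ x y, 0 ≤ pdo x y) (hd1 : ∀ x, ∑ y, pdo x y = 1)
    (pY : Y → ℝ) :
    (∀ t, 0 < ∑ x, q t x * pstar x →
      (∑ x, (q t x * pstar x / ∑ x', q t x' * pstar x') * ent (pdo x))
        ≤ ent (fun y => ∑ x, (q t x * pstar x / ∑ x', q t x' * pstar x') * pdo x y)) ∧
    ((∑ x, pstar x * ent (pdo x))
      ≤ ∑ t, (∑ x, q t x * pstar x) *
          ent (fun y => ∑ x, (q t x * pstar x / ∑ x', q t x' * pstar x') * pdo x y)) ∧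
    ((ent pY - ∑ t, (∑ x, q t x * pstar x) *
          ent (fun y => ∑ x, (q t x * pstar x / ∑ x', q t x' * pstar x') * pdo x y))
      ≤ ent pY - ∑ x, pstar x * ent (pdo x)) :=
  concavity_bound_for_representations_general pstar hps0 q hq0 hq1 pdo hd0 pY
end
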